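/- With Ξ(φ) = −arccos( (1/√2)(4 − 3√2 cos φ)/(3 − 2√2 cos φ) ), one has Ξ(π/4) = −π/4, and for all φ ∈ (0, π/2): Ξ(φ) + Ξ(π/2 − φ) ≤ −π/2, with equality only at φ = π/4. -/

import Mathlib

/-!
Write `c = cos φ`, `s = sin φ`, and `x = xiArg c`, `y = xiArg s` for the two arguments of
`arccos`. A direct computation gives `√(1 - x²) = s / (3 - 2√2 c)`, so for `x ≥ 0` the bound
`arccos x + arccos y ≥ π/2` amounts to `y ≤ s / (3 - 2√2 c)`, i.e. to
`4 - c² - 2√2 c ≤ 3 (√2 - c) s`. Both sides are nonnegative and the difference of their squares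
is `(√2 c - 1)² (2 + 2√2 c - 5 c²)`, whose second factor is positive because `x ≥ 0` means
`3√2 c ≤ 4`; so equality forces `c = √2/2`. For `x < 0` the bound is strict, as `arccos x > π/2`.
-/

open Real Set

noncomputable section

/-- `Ξ(φ) = −arccos((1/√2)(4 − 3√2 cos φ)/(3 − 2√2 cos φ))`. -/
def Xi (φ : ℝ) : ℝ :=
  - Real.arccos ((1 / Real.sqrt 2) *
    (4 - 3 * Real.sqrt 2 * Real.cos φ) / (3 - 2 * Real.sqrt 2 * Real.cos φ))

namespace Real

lemma pi_div_two_le_arccos_add_arccos {x y : ℝ} (h : 0 ≤ x → y ≤ √(1 - x ^ 2)) :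
    π / 2 ≤ arccos x + arccos y := by
  rcases lt_or_ge x 0 with hx | hx
  · linarith [arccos_le_pi_div_two.not.mpr hx.not_ge, arccos_nonneg y]
  · rw [arccos_eq_pi_div_two_sub_arcsin, arcsin_eq_arccos hx]
    linarith [arccos_le_arccos (h hx)]

lemma nonneg_and_eq_sqrt_of_arccos_add_arccos_eq {x y : ℝ} (hy₁ : -1 ≤ y) (hy₂ : y ≤ 1)
    (h : arccos x + arccos y = π / 2) : 0 ≤ x ∧ y = √(1 - x ^ 2) := by
  refine ⟨arccos_le_pi_div_two.mp (by linarith [arccos_nonneg y]), ?_⟩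
  rw [← cos_arccos hy₁ hy₂, ← sin_arccos, ← cos_pi_div_two_sub]
  congr 1
  linarith

end Real

def xiArg (c : ℝ) : ℝ := (1 / √2) * (4 - 3 * √2 * c) / (3 - 2 * √2 * c)

lemma Xi_eq_neg_arccos_xiArg (φ : ℝ) : Xi φ = -arccos (xiArg (cos φ)) := rfl

lemma xiArg_eq_div (c : ℝ) : xiArg c = (4 - 3 * √2 * c) / (√2 * (3 - 2 * √2 * c)) := by
  rw [xiArg, one_div_mul_eq_div, div_div]

lemma xiArg_sqrt_two_div_two : xiArg (√2 / 2) = √2 / 2 := by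
  have h := sq_sqrt zero_le_two
  have hd : √2 * (3 - 2 * √2 * (√2 / 2)) = √2 := by linear_combination -√2 * h
  rw [xiArg_eq_div, hd, div_eq_div_iff (by positivity) two_ne_zero]
  linear_combination -4 * h

lemma three_sub_two_sqrt_two_mul_pos {c : ℝ} (hc : c ≤ 1) : 0 < 3 - 2 * √2 * c := by
  nlinarith [sqrt_two_lt_three_halves, sqrt_nonneg 2]

lemma one_sub_xiArg_sq {c : ℝ} (hc : 3 - 2 * √2 * c ≠ 0) :
    1 - xiArg c ^ 2 = (1 - c ^ 2) / (3 - 2 * √2 * c) ^ 2 := by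
  have h := sq_sqrt zero_le_two
  rw [xiArg_eq_div, div_pow, mul_pow, h, one_sub_div (by positivity),
    div_eq_div_iff (by positivity) (by positivity)]
  linear_combination -c ^ 2 * (3 - 2 * √2 * c) ^ 2 * h

lemma sqrt_one_sub_xiArg_sq {c : ℝ} (hc : c ≤ 1) :
    √(1 - xiArg c ^ 2) = √(1 - c ^ 2) / (3 - 2 * √2 * c) := by
  have hd := three_sub_two_sqrt_two_mul_pos hc
  rw [one_sub_xiArg_sq hd.ne', sqrt_div' _ (sq_nonneg _), sqrt_sq hd.le]

lemma abs_xiArg_le_one {c : ℝ} (hc : |c| ≤ 1) : |xiArg c| ≤ 1 := by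
  have hd := three_sub_two_sqrt_two_mul_pos (abs_le.mp hc).2
  rw [← sq_le_one_iff_abs_le_one, ← sub_nonneg, one_sub_xiArg_sq hd.ne']
  have hc2 := (sq_le_one_iff_abs_le_one c).mpr hc
  exact div_nonneg (sub_nonneg.mpr hc2) (sq_nonneg _)

lemma xiArg_nonneg_iff {c : ℝ} (hc : c ≤ 1) : 0 ≤ xiArg c ↔ 3 * √2 * c ≤ 4 := by
  have hd := three_sub_two_sqrt_two_mul_pos hc
  rw [xiArg_eq_div, le_div_iff₀ (by positivity), zero_mul, sub_nonneg]

section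

variable {c s : ℝ}

lemma sq_sub_sq_eq_of_sq_add_sq (hcs : s ^ 2 + c ^ 2 = 1) :
    (3 * (√2 - c) * s) ^ 2 - (4 - c ^ 2 - 2 * √2 * c) ^ 2 =
      (√2 * c - 1) ^ 2 * (2 + 2 * √2 * c - 5 * c ^ 2) := by
  linear_combination 9 * (√2 - c) ^ 2 * hcs +
    (-2 * c ^ 3 * √2 + 5 * c ^ 4 - 11 * c ^ 2 + 9) * sq_sqrt zero_le_two

lemma div_sub_xiArg_eq_of_sq_add_sq (hcs : s ^ 2 + c ^ 2 = 1) (hc : 3 - 2 * √2 * c ≠ 0)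
    (hs : 3 - 2 * √2 * s ≠ 0) :
    s / (3 - 2 * √2 * c) - xiArg s = 4 * (3 * (√2 - c) * s - (4 - c ^ 2 - 2 * √2 * c)) /
      (√2 * (3 - 2 * √2 * c) * (3 - 2 * √2 * s)) := by
  have h := sq_sqrt zero_le_two
  rw [xiArg_eq_div, div_sub_div _ _ hc (mul_ne_zero (by positivity) hs)]
  congr 1
  · linear_combination (-2 * s ^ 2 - 6 * c * s) * h - 4 * hcs
  · ring

lemma two_add_two_sqrt_two_mul_sub_five_mul_sq_pos (hc : 0 < c) (hc4 : 3 * √2 * c ≤ 4) :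
    0 < 2 + 2 * √2 * c - 5 * c ^ 2 := by
  nlinarith [sq_sqrt zero_le_two,
    mul_nonneg (mul_nonneg (sqrt_nonneg 2) hc.le) (sub_nonneg.mpr hc4)]

lemma xiArg_le_div_of_sq_add_sq (hc : 0 < c) (hs : 0 ≤ s) (hcs : s ^ 2 + c ^ 2 = 1)
    (hc4 : 3 * √2 * c ≤ 4) : xiArg s ≤ s / (3 - 2 * √2 * c) := by
  have hc1 : c ≤ 1 := by nlinarith
  have hdc := three_sub_two_sqrt_two_mul_pos hc1
  have hds := three_sub_two_sqrt_two_mul_pos (c := s) (by nlinarith)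
  have hQ := two_add_two_sqrt_two_mul_sub_five_mul_sq_pos hc hc4
  have hu : 0 ≤ 4 - c ^ 2 - 2 * √2 * c := by nlinarith
  have hv : 0 ≤ 3 * (√2 - c) * s := by
    have hc2 : 0 ≤ √2 - c := by linarith [one_lt_sqrt_two]
    positivity
  have huv : 4 - c ^ 2 - 2 * √2 * c ≤ 3 * (√2 - c) * s := by
    rw [← sq_le_sq₀ hu hv, ← sub_nonneg, sq_sub_sq_eq_of_sq_add_sq hcs]
    positivity
  rw [← sub_nonneg, div_sub_xiArg_eq_of_sq_add_sq hcs hdc.ne' hds.ne']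
  exact div_nonneg (by linarith) (by positivity)

lemma eq_sqrt_two_div_two_of_xiArg_eq_div (hc : 0 < c) (hcs : s ^ 2 + c ^ 2 = 1)
    (hc4 : 3 * √2 * c ≤ 4) (h : xiArg s = s / (3 - 2 * √2 * c)) : c = √2 / 2 := by
  have hdc := three_sub_two_sqrt_two_mul_pos (c := c) (by nlinarith)
  have hds := three_sub_two_sqrt_two_mul_pos (c := s) (by nlinarith)
  have hQ := two_add_two_sqrt_two_mul_sub_five_mul_sq_pos hc hc4
  have huv := div_sub_xiArg_eq_of_sq_add_sq hcs hdc.ne' hds.ne'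
  rw [h, sub_self, eq_comm, div_eq_zero_iff, or_iff_left (by positivity), mul_eq_zero,
    or_iff_right four_ne_zero, sub_eq_zero] at huv
  have hsq : (√2 * c - 1) ^ 2 * (2 + 2 * √2 * c - 5 * c ^ 2) = 0 := by
    rw [← sq_sub_sq_eq_of_sq_add_sq hcs, huv, sub_self]
  have hc' : √2 * c - 1 = 0 := pow_eq_zero_iff two_ne_zero |>.mp <|
    (mul_eq_zero.mp hsq).resolve_right hQ.ne'
  linear_combination √2 / 2 * hc' - c / 2 * sq_sqrt zero_le_two

end

/-- `Ξ(π/4) = −π/4`, and for all `φ ∈ (0, π/2)`: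
`Ξ(φ) + Ξ(π/2 − φ) ≤ −π/2`, with equality only at `φ = π/4`. -/
theorem Xi_sum_bound :
    Xi (π / 4) = -(π / 4) ∧
    ∀ φ ∈ Ioo 0 (π / 2),
      Xi φ + Xi (π / 2 - φ) ≤ -(π / 2) ∧
      (Xi φ + Xi (π / 2 - φ) = -(π / 2) → φ = π / 4) := by
  refine ⟨?_, fun φ ⟨hφ0, hφ2⟩ => ?_⟩
  · rw [Xi_eq_neg_arccos_xiArg, cos_pi_div_four, xiArg_sqrt_two_div_two, ← cos_pi_div_four,
      arccos_cos (by positivity) (by linarith [pi_pos])]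
  have hc : 0 < cos φ := cos_pos_of_mem_Ioo ⟨by linarith, hφ2⟩
  have hs : 0 < sin φ := sin_pos_of_pos_of_lt_pi hφ0 (by linarith)
  have hcs := sin_sq_add_cos_sq φ
  have hsqrt : √(1 - xiArg (cos φ) ^ 2) = sin φ / (3 - 2 * √2 * cos φ) := by
    rw [sqrt_one_sub_xiArg_sq (cos_le_one φ), ← sin_eq_sqrt_one_sub_cos_sq hφ0.le (by linarith)]
  rw [Xi_eq_neg_arccos_xiArg, Xi_eq_neg_arccos_xiArg, cos_pi_div_two_sub, ← neg_add,
    neg_le_neg_iff, neg_inj]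
  refine ⟨pi_div_two_le_arccos_add_arccos fun hx => ?_, fun h => ?_⟩
  · rw [hsqrt]
    exact xiArg_le_div_of_sq_add_sq hc hs.le hcs ((xiArg_nonneg_iff (cos_le_one φ)).mp hx)
  · obtain ⟨hy₁, hy₂⟩ := abs_le.mp (abs_xiArg_le_one (abs_sin_le_one φ))
    obtain ⟨hx, hy⟩ := nonneg_and_eq_sqrt_of_arccos_add_arccos_eq hy₁ hy₂ h
    rw [hsqrt] at hy
    have hcφ := eq_sqrt_two_div_two_of_xiArg_eq_div hc hcs
      ((xiArg_nonneg_iff (cos_le_one φ)).mp hx) hy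
    exact injOn_cos ⟨hφ0.le, by linarith⟩ ⟨by positivity, by linarith [pi_pos]⟩
      (hcφ.trans cos_pi_div_four.symm)
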